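/- A distribution F over 𝒮 satisfies the pointwise maxmin-fairness condition — for every distribution D over 𝒮 and every u ∈ 𝒰, if D[u] > F[u] then there exists v ∈ 𝒰 with D[v] < F[v] and F[v] ≤ F[u] — if and only if scov(F) ⪰ scov(D) in the lexicographic order for every distribution D over 𝒮. -/

import Mathlib

open Finset

/-- `v` is strictly greater than `w` in the lexicographic order. -/
def lexGT {n : ℕ} (v w : Fin n → ℝ) : Prop :=
  ∃ i, w i < v i ∧ ∀ j < i, v j = w j

/-- `v` is greater than or equal to `w` in the lexicographic order. -/
def lexGE {n : ℕ} (v w : Fin n → ℝ) : Prop := v = w ∨ lexGT v w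

/-- The vector `v` rearranged in increasing order. -/
noncomputable def sortedVec {n : ℕ} (v : Fin n → ℝ) : Fin n → ℝ :=
  v ∘ Tuple.sort v

/-- `p` is a probability distribution over `S`. -/
def IsDistrib {S : Type*} [Fintype S] (p : S → ℝ) : Prop :=
  (∀ s, 0 ≤ p s) ∧ ∑ s, p s = 1

/-- Expected satisfaction of individual `u` under the distribution `p`. -/
def expSat {S U : Type*} [Fintype S] (A : S → U → ℝ) (p : S → ℝ) (u : U) : ℝ :=
  ∑ s, p s * A s u

/-- The vector of expected satisfactions, sorted in increasing order. -/
noncomputable def scov {S U : Type*} [Fintype S] [Fintype U] (A : S → U → ℝ) (p : S → ℝ) :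
    Fin (Fintype.card U) → ℝ :=
  sortedVec (fun i => expSat A p ((Fintype.equivFin U).symm i))

/-!
Both directions rest on one comparison criterion for sorted vectors: if `g ≥ f` at every
coordinate where `g ≤ x`, and `f ≤ x < g` at some coordinate, then at every level `y ≤ x` fewer
coordinates of `g` than of `f` lie below `y`, strictly fewer at `x`, so the sorted `g` is
lexicographically above the sorted `f`.

If `F` is pointwise fair and `D` makes someone worse off, the criterion applies with
`x = D[w]`, where `w` has the least `F`-value among those worse off under `D`. Conversely, if `D`
helps `u` while hurting only individuals strictly better off than `u` under `F`, a small enough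
step from `F` towards `D` keeps all of them above `F[u]`, and the criterion with `x = F[u]` shows
that this step improves `scov F`.
-/

open Filter Topology

lemma lexGT_iff_toLex_lt {n : ℕ} {v w : Fin n → ℝ} : lexGT v w ↔ toLex w < toLex v :=
  exists_congr fun _ => ⟨fun ⟨hi, hj⟩ => ⟨fun j hji => (hj j hji).symm, hi⟩,
    fun ⟨hj, hi⟩ => ⟨hi, fun j hji => (hj j hji).symm⟩⟩

lemma lexGE_iff_toLex_le {n : ℕ} {v w : Fin n → ℝ} : lexGE v w ↔ toLex w ≤ toLex v := by
  rw [lexGE, lexGT_iff_toLex_lt, le_iff_eq_or_lt, eq_comm, toLex_inj]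
  exact Iff.rfl

lemma not_lexGT_of_lexGE {n : ℕ} {v w : Fin n → ℝ} (h : lexGE v w) : ¬ lexGT w v :=
  (lexGE_iff_toLex_le.1 h).not_gt ∘ lexGT_iff_toLex_lt.1

lemma Monotone.le_iff_lt_card_filter_le {α : Type*} [LinearOrder α] {n : ℕ} {a : Fin n → α}
    (ha : Monotone a) (i : Fin n) (y : α) : a i ≤ y ↔ (i : ℕ) < #{j | a j ≤ y} := by
  constructor
  · intro hi
    have hsub : Iic i ⊆ ({j | a j ≤ y} : Finset (Fin n)) := fun j hj =>
      mem_filter.2 ⟨mem_univ j, (ha (mem_Iic.1 hj)).trans hi⟩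
    have := card_le_card hsub
    rw [Fin.card_Iic] at this
    omega
  · intro hi
    by_contra! hyi
    have hsub : ({j | a j ≤ y} : Finset (Fin n)) ⊆ Iio i := fun j hj =>
      mem_Iio.2 (ha.reflect_lt ((mem_filter.1 hj).2.trans_lt hyi))
    have := card_le_card hsub
    rw [Fin.card_Iio] at this
    omega

lemma card_filter_sortedVec_le {n : ℕ} (f : Fin n → ℝ) (y : ℝ) :
    #{i | sortedVec f i ≤ y} = #{i | f i ≤ y} :=
  card_equiv (Tuple.sort f) fun _ => by simp only [Finset.mem_filter]; simp [sortedVec]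

lemma lexGT_of_card_filter_le {n : ℕ} {a b : Fin n → ℝ} (ha : Monotone a) (hb : Monotone b)
    {x : ℝ} (hle : ∀ y ≤ x, #{j | b j ≤ y} ≤ #{j | a j ≤ y})
    (hlt : #{j | b j ≤ x} < #{j | a j ≤ x}) : lexGT b a := by
  have hne : a ≠ b := by rintro rfl; exact hlt.false
  rw [lexGT_iff_toLex_lt]
  refine (show toLex a ≠ toLex b from mt toLex_inj.1 hne).lt_or_gt.resolve_right ?_
  rintro ⟨i, hpre, hi⟩
  by_cases hbx : b i ≤ x
  · have hai : a i ≤ b i := (ha.le_iff_lt_card_filter_le i _).2 <|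
      ((hb.le_iff_lt_card_filter_le i _).1 le_rfl).trans_le (hle _ hbx)
    exact hai.not_gt hi
  · push Not at hbx
    have heq : (univ.filter fun j => b j ≤ x) = univ.filter fun j => a j ≤ x := by
      ext j
      simp only [mem_filter, mem_univ, true_and]
      rcases lt_or_ge j i with hji | hij
      · rw [show b j = a j from hpre j hji]
      · exact iff_of_false (hbx.trans_le (hb hij)).not_ge
          ((hbx.trans hi).trans_le (ha hij)).not_ge
    exact (heq ▸ hlt).false

lemma lexGT_sortedVec_of_le {n : ℕ} {f g : Fin n → ℝ} {x : ℝ}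
    (hle : ∀ i, g i ≤ x → f i ≤ g i) (hlt : ∃ i, f i ≤ x ∧ x < g i) :
    lexGT (sortedVec g) (sortedVec f) := by
  refine lexGT_of_card_filter_le (Tuple.monotone_sort f) (Tuple.monotone_sort g) (x := x)
    (fun y hy => ?_) ?_ <;> rw [card_filter_sortedVec_le, card_filter_sortedVec_le]
  · exact card_le_card fun i hi => by
      simp only [mem_filter, mem_univ, true_and] at hi ⊢
      exact (hle i (hi.trans hy)).trans hi
  · obtain ⟨i, hfi, hgi⟩ := hlt
    refine card_lt_card ⟨fun j hj => ?_, fun hsub => ?_⟩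
    · simp only [mem_filter, mem_univ, true_and] at hj ⊢
      exact (hle j hj).trans hj
    · have := hsub (mem_filter.2 ⟨mem_univ i, hfi⟩)
      exact (mem_filter.1 this).2.not_gt hgi

lemma exists_pos_le_one_forall_lt_convexComb {U : Type*} [Finite U] (f g : U → ℝ) (t : ℝ) :
    ∃ ε : ℝ, 0 < ε ∧ ε ≤ 1 ∧ ∀ v, t < f v → t < (1 - ε) * f v + ε * g v := by
  have hnear : ∀ᶠ ε in 𝓝 (0 : ℝ), ε ≤ 1 ∧ ∀ v, t < f v → t < (1 - ε) * f v + ε * g v := by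
    refine (eventually_le_nhds one_pos).and (eventually_all.2 fun v => ?_)
    by_cases hv : t < f v
    · have hcont : Continuous fun ε : ℝ => (1 - ε) * f v + ε * g v := by fun_prop
      exact (hcont.tendsto' 0 _ (by simp)).eventually_const_lt hv |>.mono fun _ h _ => h
    · exact Eventually.of_forall fun _ h => absurd h hv
  obtain ⟨ε, ⟨hε1, hεlt⟩, hε0⟩ :=
    ((hnear.filter_mono nhdsWithin_le_nhds).and self_mem_nhdsWithin).exists (f := 𝓝[>] (0 : ℝ))
  exact ⟨ε, hε0, hε1, hεlt⟩

lemma expSat_smul_add_smul {S U : Type*} [Fintype S] (A : S → U → ℝ) (p q : S → ℝ) (a b : ℝ)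
    (u : U) : expSat A (a • p + b • q) u = a * expSat A p u + b * expSat A q u := by
  simp only [expSat, Pi.add_apply, Pi.smul_apply, smul_eq_mul, add_mul, sum_add_distrib,
    mul_sum, mul_assoc]

section Distributions

variable {S U : Type*} [Fintype S] [Fintype U] {A : S → U → ℝ}

lemma lexGT_scov_of_le {p q : S → ℝ} {x : ℝ}
    (hle : ∀ u, expSat A q u ≤ x → expSat A p u ≤ expSat A q u)
    (hlt : ∃ u, expSat A p u ≤ x ∧ x < expSat A q u) : lexGT (scov A q) (scov A p) := by
  obtain ⟨u, hu⟩ := hlt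
  exact lexGT_sortedVec_of_le (fun _ => hle _) ⟨Fintype.equivFin U u, by simpa using hu⟩

lemma lexGE_scov_of_pointwise_fair {p q : S → ℝ}
    (hfair : ∀ u, expSat A p u < expSat A q u →
      ∃ v, expSat A q v < expSat A p v ∧ expSat A p v ≤ expSat A p u) :
    lexGE (scov A p) (scov A q) := by
  by_cases hex : ∃ v, expSat A q v < expSat A p v
  · obtain ⟨w, hw, hmin⟩ := exists_min_image {v | expSat A q v < expSat A p v} (expSat A p)
      (by simpa [Finset.Nonempty] using hex)
    simp only [mem_filter, mem_univ, true_and] at hw hmin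
    refine .inr (lexGT_scov_of_le (x := expSat A q w) (fun v hv => ?_) ⟨w, le_rfl, hw⟩)
    by_contra! hqv
    obtain ⟨v', hv', hv'v⟩ := hfair v hqv
    linarith [hmin v' hv']
  · push Not at hex
    have hqp : expSat A q = expSat A p := funext fun v => (hex v).antisymm' <| by
      by_contra! hv
      obtain ⟨w, hw, -⟩ := hfair v hv
      exact (hex w).not_gt hw
    exact .inl (by rw [scov, scov, hqp])

lemma exists_isDistrib_lexGT_scov {F D : S → ℝ} (hF : IsDistrib F) (hD : IsDistrib D) {u : U}
    (hu : expSat A F u < expSat A D u)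
    (hworse : ∀ v, expSat A D v < expSat A F v → expSat A F u < expSat A F v) :
    ∃ E, IsDistrib E ∧ lexGT (scov A E) (scov A F) := by
  obtain ⟨ε, hε0, hε1, hεlt⟩ := exists_pos_le_one_forall_lt_convexComb
    (expSat A F) (expSat A D) (expSat A F u)
  have hEsat (v : U) : expSat A ((1 - ε) • F + ε • D) v
      = (1 - ε) * expSat A F v + ε * expSat A D v := expSat_smul_add_smul A F D _ _ v
  refine ⟨(1 - ε) • F + ε • D, convex_stdSimplex ℝ S hF hD (by linarith) hε0.le (by ring),
    lexGT_scov_of_le (x := expSat A F u) (fun v hv => ?_) ⟨u, le_rfl, ?_⟩⟩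
  · rw [hEsat] at hv ⊢
    by_cases hDv : expSat A D v < expSat A F v
    · exact absurd hv (hεlt v (hworse v hDv)).not_ge
    · nlinarith
  · rw [hEsat]
    nlinarith

end Distributions

theorem maxmin_pointwise_iff_lex_general {S U : Type*} [Fintype S] [Fintype U]
    (A : S → U → ℝ) (F : S → ℝ) (hF : IsDistrib F) :
    (∀ D : S → ℝ, IsDistrib D → ∀ u : U, expSat A F u < expSat A D u →
        ∃ v : U, expSat A D v < expSat A F v ∧ expSat A F v ≤ expSat A F u)
      ↔ (∀ D : S → ℝ, IsDistrib D → lexGE (scov A F) (scov A D)) := by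
  refine ⟨fun hfair D hD => lexGE_scov_of_pointwise_fair (hfair D hD), fun hlex D hD u hu => ?_⟩
  by_contra! hworse
  obtain ⟨E, hE, hgt⟩ := exists_isDistrib_lexGT_scov hF hD hu hworse
  exact not_lexGT_of_lexGE (hlex E hE) hgt

/-- A distribution `F` satisfies the pointwise maxmin-fairness condition iff
`scov F` lexicographically dominates `scov D` for every distribution `D`. -/
theorem maxmin_pointwise_iff_lex {S U : Type*} [Fintype S] [Fintype U] [Nonempty S] [Nonempty U]
    (A : S → U → ℝ) (F : S → ℝ) (hF : IsDistrib F) :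
    (∀ D : S → ℝ, IsDistrib D → ∀ u : U, expSat A F u < expSat A D u →
        ∃ v : U, expSat A D v < expSat A F v ∧ expSat A F v ≤ expSat A F u)
      ↔ (∀ D : S → ℝ, IsDistrib D → lexGE (scov A F) (scov A D)) :=
  maxmin_pointwise_iff_lex_general A F hF
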